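/- Let n ≥ 2 be an integer and δ ∈ (1/2, 1]. Then for every coherent random vector (X_1, X_2, …, X_n), one has P(max_{1 ≤ i < j ≤ n} |X_i − X_j| ≥ δ) ≤ min(n(1−δ)/(2−δ), 1). -/

import Mathlib

open MeasureTheory

noncomputable section

/-- The event that some pair of the variables differ by at least `δ`. -/
def maxEvent {Ω : Type} {n : ℕ} (X : Fin n → Ω → ℝ) (δ : ℝ) : Set Ω :=
  {ω | ∃ i j : Fin n, i < j ∧ δ ≤ |X i ω - X j ω|}

/-- A random vector is coherent if each coordinate is a conditional expectation of the
indicator of a common event `A` with respect to some sub-σ-algebra. -/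
def Coherent {Ω : Type} [mΩ : MeasurableSpace Ω] (P : Measure Ω) {n : ℕ}
    (X : Fin n → Ω → ℝ) : Prop :=
  ∃ (G : Fin n → MeasurableSpace Ω) (A : Set Ω),
    (∀ i, G i ≤ mΩ) ∧ MeasurableSet A ∧
    ∀ i, X i =ᵐ[P] P[A.indicator (fun _ => (1 : ℝ)) | G i]

/-!
Write `B = 1_A` and `Y i = E[B | G i]`, with values in `[0, 1]`. The events `{Y i ≥ δ}` and
`{Y i ≤ 1 - δ}` are `G i`-measurable, so `B - Y i` integrates to zero over each of them. Hence
`w(B, Y i) = ((1_{Y i ≤ 1-δ} - 1_{Y i ≥ δ}) (B - Y i) + 1 - δ) / (2 - δ)` has mean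
`(1 - δ) / (2 - δ)`. Pointwise `w ≥ 0`, and when `Y i - Y j ≥ δ > 1/2` we have `Y i ≥ δ` and
`Y j ≤ 1 - δ`, so `w(B, Y i) + w(B, Y j) = (Y i - Y j + 2 - 2δ) / (2 - δ) ≥ 1`. Thus `∑ i, w(B, Y i)`
dominates the indicator of the event, and Markov's inequality gives the bound `n (1-δ)/(2-δ)`.
-/

section DualWeight

variable {δ a y y' : ℝ}

def dualWeight (δ a y : ℝ) : ℝ :=
  ((if y ≤ 1 - δ then a - y else 0) - (if δ ≤ y then a - y else 0) + (1 - δ)) / (2 - δ)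

lemma dualWeight_nonneg (hδ : δ ≤ 1) (ha : a ∈ Set.Icc (0 : ℝ) 1) : 0 ≤ dualWeight δ a y := by
  obtain ⟨ha0, ha1⟩ := ha
  unfold dualWeight
  apply div_nonneg _ (by linarith)
  split_ifs <;> linarith

lemma one_le_dualWeight_add_dualWeight (hδ : 1 / 2 < δ) (hy : y ≤ 1) (hy' : 0 ≤ y')
    (hsep : δ ≤ y - y') : 1 ≤ dualWeight δ a y + dualWeight δ a y' := by
  have hy_high : ¬ y ≤ 1 - δ := by linarith
  have hy'_low : y' ≤ 1 - δ := by linarith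
  have hy'_not_high : ¬ δ ≤ y' := by linarith
  have h2δ : 0 < 2 - δ := by linarith
  rw [dualWeight, dualWeight, if_neg hy_high, if_pos (by linarith : δ ≤ y), if_pos hy'_low,
    if_neg hy'_not_high, ← add_div, le_div_iff₀ h2δ]
  linarith

lemma one_le_sum_dualWeight {ι : Type*} [Fintype ι] {y : ι → ℝ} (hδ : 1 / 2 < δ)
    (ha : a ∈ Set.Icc (0 : ℝ) 1) (hy : ∀ k, y k ∈ Set.Icc (0 : ℝ) 1) {i j : ι} (hij : i ≠ j)
    (hsep : δ ≤ |y i - y j|) : 1 ≤ ∑ k, dualWeight δ a (y k) := by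
  classical
  obtain ⟨⟨hyi0, hyi1⟩, ⟨hyj0, hyj1⟩⟩ := And.intro (hy i) (hy j)
  have hδ1 : δ ≤ 1 := hsep.trans (abs_sub_le_iff.2 ⟨by linarith, by linarith⟩)
  have hpair : 1 ≤ dualWeight δ a (y i) + dualWeight δ a (y j) := by
    rcases le_abs'.1 hsep with h | h
    · rw [add_comm]
      exact one_le_dualWeight_add_dualWeight hδ hyj1 hyi0 (by linarith)
    · exact one_le_dualWeight_add_dualWeight hδ hyi1 hyj0 h
  calc 1 ≤ ∑ k ∈ {i, j}, dualWeight δ a (y k) := by rwa [Finset.sum_pair hij]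
    _ ≤ ∑ k, dualWeight δ a (y k) :=
      Finset.sum_le_sum_of_subset_of_nonneg (Finset.subset_univ _)
        fun k _ _ => dualWeight_nonneg hδ1 ha

end DualWeight

section CondExp

variable {Ω : Type*} {m m0 : MeasurableSpace Ω} {μ : Measure Ω} {f : Ω → ℝ}

lemma ae_condExp_mem_Icc [IsFiniteMeasure μ] (hm : m ≤ m0) (hf : Integrable f μ)
    (hf01 : ∀ᵐ ω ∂μ, f ω ∈ Set.Icc (0 : ℝ) 1) : ∀ᵐ ω ∂μ, μ[f | m] ω ∈ Set.Icc (0 : ℝ) 1 := by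
  have hle : μ[f | m] ≤ᵐ[μ] μ[fun _ => (1 : ℝ) | m] :=
    condExp_mono hf (integrable_const 1) (hf01.mono fun _ h => h.2)
  rw [condExp_const hm] at hle
  filter_upwards [condExp_nonneg (m := m) (hf01.mono fun _ h => h.1), hle] with ω h0 h1
  exact ⟨h0, h1⟩

lemma setIntegral_sub_condExp (hm : m ≤ m0) [SigmaFinite (μ.trim hm)] (hf : Integrable f μ)
    {s : Set Ω} (hs : MeasurableSet[m] s) : ∫ ω in s, (f - μ[f | m]) ω ∂μ = 0 := by
  rw [Pi.sub_def, integral_sub hf.integrableOn integrable_condExp.integrableOn,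
    setIntegral_condExp hm hf hs, sub_self]

variable {δ : ℝ}

lemma dualWeight_comp_eq (g : Ω → ℝ) :
    (fun ω => dualWeight δ (f ω) (g ω)) = fun ω =>
      ({ω | g ω ≤ 1 - δ}.indicator (f - g) ω - {ω | δ ≤ g ω}.indicator (f - g) ω + (1 - δ))
        / (2 - δ) := by
  ext ω
  simp only [dualWeight, Set.indicator_apply, Set.mem_ofPred_eq, Pi.sub_apply]

lemma integrable_dualWeight_condExp [IsFiniteMeasure μ] (hm : m ≤ m0) (hf : Integrable f μ) :
    Integrable (fun ω => dualWeight δ (f ω) (μ[f | m] ω)) μ := by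
  have hY := (stronglyMeasurable_condExp (m := m) (μ := μ) (f := f)).measurable
  have hfY : Integrable (f - μ[f | m]) μ := hf.sub integrable_condExp
  rw [dualWeight_comp_eq]
  exact (((hfY.indicator (hm _ (hY measurableSet_Iic))).sub
    (hfY.indicator (hm _ (hY measurableSet_Ici)))).add (integrable_const _)).div_const _

lemma integral_dualWeight_condExp [IsFiniteMeasure μ] (hm : m ≤ m0) (hf : Integrable f μ) :
    ∫ ω, dualWeight δ (f ω) (μ[f | m] ω) ∂μ = μ.real Set.univ * ((1 - δ) / (2 - δ)) := by
  have hY := (stronglyMeasurable_condExp (m := m) (μ := μ) (f := f)).measurable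
  have hT : MeasurableSet[m] {ω | μ[f | m] ω ≤ 1 - δ} := hY measurableSet_Iic
  have hS : MeasurableSet[m] {ω | δ ≤ μ[f | m] ω} := hY measurableSet_Ici
  have hfY : Integrable (f - μ[f | m]) μ := hf.sub integrable_condExp
  rw [dualWeight_comp_eq, integral_div, integral_add _ (integrable_const _),
    integral_sub (hfY.indicator (hm _ hT)) (hfY.indicator (hm _ hS)),
    integral_indicator (hm _ hT), integral_indicator (hm _ hS),
    setIntegral_sub_condExp hm hf hT, setIntegral_sub_condExp hm hf hS, integral_const,
    smul_eq_mul, sub_self, zero_add, mul_div_assoc]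
  exact (hfY.indicator (hm _ hT)).sub (hfY.indicator (hm _ hS))

end CondExp

theorem prob_max_pairwise_diff_le {Ω : Type} [mΩ : MeasurableSpace Ω] (P : Measure Ω)
    [IsProbabilityMeasure P] (n : ℕ) (δ : ℝ)
    (hδ : δ ∈ Set.Ioc (1 / 2 : ℝ) 1) (X : Fin n → Ω → ℝ) (hX : Coherent P X) :
    (P (maxEvent X δ)).toReal ≤ min ((n : ℝ) * (1 - δ) / (2 - δ)) 1 := by
  obtain ⟨G, A, hG, hA, hXY⟩ := hX
  set B : Ω → ℝ := A.indicator fun _ => 1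
  have hB : Integrable B P := (integrable_const 1).indicator hA
  have hB01 : ∀ ω, B ω ∈ Set.Icc (0 : ℝ) 1 := fun ω => by
    by_cases h : ω ∈ A <;> simp [B, h]
  set F : Ω → ℝ := fun ω => ∑ i, dualWeight δ (B ω) (P[B | G i] ω)
  have hF_int : Integrable F P :=
    integrable_finsetSum _ fun i _ => integrable_dualWeight_condExp (hG i) hB
  have hF_mean : ∫ ω, F ω ∂P = n * ((1 - δ) / (2 - δ)) := by
    simp [F, integral_finsetSum _ fun i _ => integrable_dualWeight_condExp (hG i) hB,
      integral_dualWeight_condExp (hG _) hB]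
  have hsub : maxEvent X δ ≤ᵐ[P] {ω | 1 ≤ F ω} := by
    filter_upwards [ae_all_iff.2 hXY,
      ae_all_iff.2 fun i => ae_condExp_mem_Icc (hG i) hB (.of_forall hB01)]
      with ω hXω hY01 ⟨i, j, hij, hsep⟩
    rw [hXω i, hXω j] at hsep
    exact one_le_sum_dualWeight hδ.1 (hB01 ω) hY01 hij.ne hsep
  refine le_min ?_ measureReal_le_one
  calc (P (maxEvent X δ)).toReal ≤ P.real {ω | 1 ≤ F ω} :=
        ENNReal.toReal_mono (measure_ne_top _ _) (measure_mono_ae hsub)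
    _ ≤ ∫ ω, F ω ∂P := by
        simpa using mul_meas_ge_le_integral_of_nonneg
          (.of_forall fun ω => Finset.sum_nonneg fun i _ => dualWeight_nonneg hδ.2 (hB01 ω))
          hF_int 1
    _ = n * (1 - δ) / (2 - δ) := by rw [hF_mean, mul_div_assoc]
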